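/- Let m and m* be ℝ^d-valued random vectors with square-integrable components and all pairwise products integrable. Set G := E(m·m*ᵀ) and G* := E(m*·m*ᵀ), and suppose G and G* are invertible d×d matrices. Then the difference of sandwich matrices G⁻¹·E(m·mᵀ)·(G⁻¹)ᵀ − (G*)⁻¹ is positive semidefinite. (This is the key inequality showing that the generalized-method-of-moments estimator built from the estimating function m* attains the minimum asymptotic variance among those built from estimating functions m whose cross moment with m* equals their own Jacobian matrix G.) -/

import Mathlib

open MeasureTheory Matrix

/-!
The second-moment matrix of the joint vector `(m, m*)` is the block matrix
`[[M, G], [Gᵀ, G*]]`, and it is positive semidefinite because its quadratic form is the integral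
of a square. Since `G*` is positive semidefinite and invertible, it is positive definite, so the
Schur complement `M - G G*⁻¹ Gᵀ` is positive semidefinite; conjugating it by `G⁻¹` gives
`G⁻¹ M G⁻ᵀ - G*⁻¹`.
-/

namespace MeasureTheory

variable {Ω ι κ : Type*} [MeasurableSpace Ω] (μ : Measure Ω)

noncomputable def secondMomentMatrix (f : Ω → ι → ℝ) (g : Ω → κ → ℝ) : Matrix ι κ ℝ :=
  of fun i j => ∫ ω, f ω i * g ω j ∂μ

variable {μ}

theorem transpose_secondMomentMatrix (f : Ω → ι → ℝ) (g : Ω → κ → ℝ) :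
    (secondMomentMatrix μ f g)ᵀ = secondMomentMatrix μ g f := by
  ext i j
  simp only [transpose_apply, secondMomentMatrix, of_apply, mul_comm]

theorem secondMomentMatrix_sumElim (f : Ω → ι → ℝ) (g : Ω → κ → ℝ) :
    secondMomentMatrix μ (fun ω => Sum.elim (f ω) (g ω)) (fun ω => Sum.elim (f ω) (g ω)) =
      fromBlocks (secondMomentMatrix μ f f) (secondMomentMatrix μ f g)
        (secondMomentMatrix μ g f) (secondMomentMatrix μ g g) := by
  ext (i | i) (j | j) <;> rfl

theorem dotProduct_secondMomentMatrix_mulVec [Fintype ι] [Fintype κ] {f : Ω → ι → ℝ}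
    {g : Ω → κ → ℝ} (hfg : ∀ i j, Integrable (fun ω => f ω i * g ω j) μ)
    (x : ι → ℝ) (y : κ → ℝ) :
    x ⬝ᵥ secondMomentMatrix μ f g *ᵥ y = ∫ ω, (x ⬝ᵥ f ω) * (g ω ⬝ᵥ y) ∂μ := by
  have hterm : ∀ i j, Integrable (fun ω => x i * (f ω i * g ω j) * y j) μ :=
    fun i j => ((hfg i j).const_mul (x i)).mul_const (y j)
  calc x ⬝ᵥ secondMomentMatrix μ f g *ᵥ y
      = ∑ i, ∑ j, ∫ ω, x i * (f ω i * g ω j) * y j ∂μ := by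
        simp only [dotProduct, mulVec, secondMomentMatrix, of_apply, Finset.mul_sum,
          integral_mul_const, integral_const_mul]
        simp only [mul_assoc]
    _ = ∫ ω, ∑ i, ∑ j, x i * (f ω i * g ω j) * y j ∂μ := by
        rw [integral_finsetSum _ fun i _ => integrable_finsetSum _ fun j _ => hterm i j]
        exact Finset.sum_congr rfl fun i _ => (integral_finsetSum _ fun j _ => hterm i j).symm
    _ = ∫ ω, (x ⬝ᵥ f ω) * (g ω ⬝ᵥ y) ∂μ := by
        simp only [dotProduct, Finset.sum_mul_sum, mul_assoc]

theorem posSemidef_secondMomentMatrix [Fintype ι] {f : Ω → ι → ℝ}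
    (hf : ∀ i j, Integrable (fun ω => f ω i * f ω j) μ) :
    (secondMomentMatrix μ f f).PosSemidef := by
  refine posSemidef_iff_dotProduct_mulVec.mpr ⟨?_, fun x => ?_⟩
  · rw [IsHermitian, conjTranspose_eq_transpose_of_trivial, transpose_secondMomentMatrix]
  · rw [star_trivial, dotProduct_secondMomentMatrix_mulVec hf]
    exact integral_nonneg fun ω => by rw [dotProduct_comm (f ω)]; exact mul_self_nonneg _

end MeasureTheory

theorem gmm_sandwich_efficiency_general
    {Ω : Type*} [mΩ : MeasurableSpace Ω]
    (μ : Measure Ω)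
    {d : ℕ}
    (m mstar : Ω → Fin d → ℝ)
    (hmm : ∀ k j, Integrable (fun ω => m ω k * m ω j) μ)
    (hmms : ∀ k j, Integrable (fun ω => m ω k * mstar ω j) μ)
    (hmsms : ∀ k j, Integrable (fun ω => mstar ω k * mstar ω j) μ)
    (G Gstar M : Matrix (Fin d) (Fin d) ℝ)
    (hG : G = Matrix.of fun k j => ∫ ω, m ω k * mstar ω j ∂μ)
    (hGstar : Gstar = Matrix.of fun k j => ∫ ω, mstar ω k * mstar ω j ∂μ)
    (hM : M = Matrix.of fun k j => ∫ ω, m ω k * m ω j ∂μ)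
    (hGinv : IsUnit G.det) (hGstarinv : IsUnit Gstar.det) :
    (G⁻¹ * M * (G⁻¹)ᵀ - Gstar⁻¹).PosSemidef := by
  change G = secondMomentMatrix μ m mstar at hG
  change Gstar = secondMomentMatrix μ mstar mstar at hGstar
  change M = secondMomentMatrix μ m m at hM
  have hmsm : ∀ k j, Integrable (fun ω => mstar ω k * m ω j) μ := fun k j =>
    (hmms j k).congr (.of_forall fun ω => mul_comm _ _)
  have hJoint : (fromBlocks M G Gᵀ Gstar).PosSemidef := by
    rw [hM, hG, hGstar, transpose_secondMomentMatrix, ← secondMomentMatrix_sumElim]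
    refine posSemidef_secondMomentMatrix fun i j => ?_
    rcases i with i | i <;> rcases j with j | j
    exacts [hmm i j, hmms i j, hmsm i j, hmsms i j]
  have hGstarPD : Gstar.PosDef := by
    have hGstarPSD : Gstar.PosSemidef := hGstar ▸ posSemidef_secondMomentMatrix hmsms
    exact hGstarPSD.posDef_iff_isUnit.mpr ((isUnit_iff_isUnit_det _).mpr hGstarinv)
  have : Invertible Gstar := Gstar.invertibleOfIsUnitDet hGstarinv
  have hSchur : (M - G * Gstar⁻¹ * Gᵀ).PosSemidef := by
    rw [← conjTranspose_eq_transpose_of_trivial] at hJoint ⊢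
    exact (hGstarPD.fromBlocks₂₂ M G).mp hJoint
  have hConj : G⁻¹ * (M - G * Gstar⁻¹ * Gᵀ) * (G⁻¹)ᵀ = G⁻¹ * M * (G⁻¹)ᵀ - Gstar⁻¹ := by
    simp only [mul_sub, sub_mul, ← Matrix.mul_assoc, nonsing_inv_mul _ hGinv, Matrix.one_mul,
      transpose_nonsing_inv]
    rw [Matrix.mul_assoc Gstar⁻¹, mul_nonsing_inv _ (by rwa [det_transpose]), Matrix.mul_one]
  rw [← hConj]
  simpa only [conjTranspose_eq_transpose_of_trivial] using hSchur.mul_mul_conjTranspose_same G⁻¹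

/-- GMM efficiency inequality: if `G = E(m m*ᵀ)` and `G* = E(m* m*ᵀ)` are
invertible, then `G⁻¹ E(m mᵀ) G⁻ᵀ − (G*)⁻¹` is positive semidefinite. -/
theorem gmm_sandwich_efficiency
    {Ω : Type*} [mΩ : MeasurableSpace Ω]
    (μ : Measure Ω) [IsProbabilityMeasure μ]
    {d : ℕ}
    (m mstar : Ω → Fin d → ℝ)
    (hm2 : ∀ k, MemLp (fun ω => m ω k) 2 μ)
    (hmstar2 : ∀ k, MemLp (fun ω => mstar ω k) 2 μ)
    (hmm : ∀ k j, Integrable (fun ω => m ω k * m ω j) μ)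
    (hmms : ∀ k j, Integrable (fun ω => m ω k * mstar ω j) μ)
    (hmsms : ∀ k j, Integrable (fun ω => mstar ω k * mstar ω j) μ)
    (G Gstar M : Matrix (Fin d) (Fin d) ℝ)
    (hG : G = Matrix.of fun k j => ∫ ω, m ω k * mstar ω j ∂μ)
    (hGstar : Gstar = Matrix.of fun k j => ∫ ω, mstar ω k * mstar ω j ∂μ)
    (hM : M = Matrix.of fun k j => ∫ ω, m ω k * m ω j ∂μ)
    (hGinv : IsUnit G.det) (hGstarinv : IsUnit Gstar.det) :
    (G⁻¹ * M * (G⁻¹)ᵀ - Gstar⁻¹).PosSemidef :=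
  gmm_sandwich_efficiency_general (mΩ := mΩ) μ m mstar hmm hmms hmsms G Gstar M hG hGstar hM hGinv
    hGstarinv
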